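/- Let d ≥ 1, κ ∈ (0,1], L > 0, and α > 0 with α·κ ≤ 1. Then there exist functions f₁, f₂ : ℝ^d → ℝ with values in [0,1] that are (κ, L)-Hölder on [0,1]^d, and a constant C₀ > 0, such that: (i) for every δ ∈ (0,1], the Lebesgue measure of {x ∈ [0,1]^d : 0 < |f₁(x) − f₂(x)| ≤ δ} is at most C₀·δ^α; and (ii) both sets {x ∈ [0,1]^d : f₁(x) > f₂(x)} and {x ∈ [0,1]^d : f₂(x) > f₁(x)} have positive Lebesgue measure. -/
import Mathlib

open MeasureTheory

/-- subadditivity of rpow for exponent ≤ 1 on nonneg reals -/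
lemma aux_rpow_sub_le {κ : ℝ} (hκ0 : 0 < κ) (hκ1 : κ ≤ 1) {s t : ℝ}
    (ht : 0 ≤ t) (hts : t ≤ s) : s ^ κ - t ^ κ ≤ (s - t) ^ κ := by
  have hs : 0 ≤ s := ht.trans hts
  have h := NNReal.rpow_add_le_add_rpow (t.toNNReal) ((s - t).toNNReal) hκ0.le hκ1
  have hsum : (t.toNNReal + (s - t).toNNReal) = s.toNNReal := by
    ext
    simp [Real.toNNReal_of_nonneg ht, Real.toNNReal_of_nonneg (sub_nonneg.2 hts),
      Real.toNNReal_of_nonneg hs]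
  rw [hsum] at h
  have := (NNReal.coe_le_coe).2 h
  push_cast [NNReal.coe_rpow] at this
  rw [Real.coe_toNNReal _ hs, Real.coe_toNNReal _ ht,
    Real.coe_toNNReal _ (sub_nonneg.2 hts)] at this
  linarith

lemma aux_abs_rpow_sub {κ : ℝ} (hκ0 : 0 < κ) (hκ1 : κ ≤ 1) {s t : ℝ}
    (hs : 0 ≤ s) (ht : 0 ≤ t) : |s ^ κ - t ^ κ| ≤ |s - t| ^ κ := by
  rcases le_total t s with h | h
  · rw [abs_of_nonneg (sub_nonneg.2 (Real.rpow_le_rpow ht h hκ0.le)),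
      abs_of_nonneg (sub_nonneg.2 h)]
    exact aux_rpow_sub_le hκ0 hκ1 ht h
  · rw [abs_of_nonpos (sub_nonpos.2 (Real.rpow_le_rpow hs h hκ0.le)),
      abs_of_nonpos (sub_nonpos.2 h), neg_sub, neg_sub s t]
    exact aux_rpow_sub_le hκ0 hκ1 hs h

noncomputable def auxP (t : ℝ) : ℝ := min (max (t - 1/2) 0) (1/2)

lemma auxP_nonneg (t : ℝ) : 0 ≤ auxP t :=
  le_min (le_max_right _ _) (by norm_num)

lemma auxP_le_half (t : ℝ) : auxP t ≤ 1/2 := min_le_right _ _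

lemma auxP_lipschitz (a b : ℝ) : |auxP a - auxP b| ≤ |a - b| := by
  have h1 := abs_min_sub_min_le_max (max (a - 1/2) 0) (1/2 : ℝ) (max (b - 1/2) 0) (1/2 : ℝ)
  have h2 := abs_max_sub_max_le_abs (a - 1/2) (b - 1/2) 0
  have h3 : a - 1/2 - (b - 1/2) = a - b := by ring
  rw [h3] at h2
  refine (h1.trans ?_)
  simp only [sub_self, abs_zero]
  exact max_le h2 (abs_nonneg _)

lemma auxP_eq_zero {t : ℝ} (h : t ≤ 1/2) : auxP t = 0 := by
  unfold auxP
  rw [max_eq_right (by linarith), min_eq_left (by norm_num)]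

lemma auxP_eq {t : ℝ} (h : 1/2 ≤ t) (h1 : t ≤ 1) : auxP t = t - 1/2 := by
  unfold auxP
  rw [max_eq_left (by linarith), min_eq_left (by linarith)]

/-- **Margin condition and smoothness, Part 2.** If `α · κ ≤ 1`, there exist payoff
functions `f₁, f₂ : ℝ^d → ℝ` with values in `[0,1]` that are `(κ, L)`-Hölder on the cube
`[0,1]^d` (sup norm) and satisfy the margin condition (with respect to Lebesgue measure)
with exponent `α` and some constant `C₀ > 0`, such that each of the two actions is
strictly optimal on a set of positive Lebesgue measure. -/
theorem margin_smoothness_nontrivial_instance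
    (d : ℕ) (hd : 1 ≤ d) (κ L α : ℝ)
    (hκ0 : 0 < κ) (hκ1 : κ ≤ 1) (hL : 0 < L) (hα : 0 < α) (hακ : α * κ ≤ 1) :
    ∃ (f₁ f₂ : (Fin d → ℝ) → ℝ) (C₀ : ℝ), 0 < C₀ ∧
      (∀ x, f₁ x ∈ Set.Icc (0 : ℝ) 1) ∧
      (∀ x, f₂ x ∈ Set.Icc (0 : ℝ) 1) ∧
      (∀ x ∈ Set.Icc (0 : Fin d → ℝ) 1, ∀ y ∈ Set.Icc (0 : Fin d → ℝ) 1,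
        |f₁ x - f₁ y| ≤ L * ‖x - y‖ ^ κ) ∧
      (∀ x ∈ Set.Icc (0 : Fin d → ℝ) 1, ∀ y ∈ Set.Icc (0 : Fin d → ℝ) 1,
        |f₂ x - f₂ y| ≤ L * ‖x - y‖ ^ κ) ∧
      (∀ δ ∈ Set.Ioc (0 : ℝ) 1,
        volume {x ∈ Set.Icc (0 : Fin d → ℝ) 1 | 0 < |f₁ x - f₂ x| ∧ |f₁ x - f₂ x| ≤ δ}
          ≤ ENNReal.ofReal (C₀ * δ ^ α)) ∧
      0 < volume {x ∈ Set.Icc (0 : Fin d → ℝ) 1 | f₂ x < f₁ x} ∧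
      0 < volume {x ∈ Set.Icc (0 : Fin d → ℝ) 1 | f₁ x < f₂ x} := by
  set i0 : Fin d := ⟨0, hd⟩ with hi0
  set c : ℝ := min L (1/2) with hc_def
  have hc : 0 < c := lt_min hL (by norm_num)
  have hcL : c ≤ L := min_le_left _ _
  have hch : c ≤ 1/2 := min_le_right _ _
  set f₁ : (Fin d → ℝ) → ℝ := fun x => 1/2 + c * auxP (x i0) ^ κ with hf1
  set f₂ : (Fin d → ℝ) → ℝ := fun x => 1/2 + c * auxP (1 - x i0) ^ κ with hf2
  set C₀ : ℝ := 2 * c⁻¹ ^ κ⁻¹ with hC0_def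
  have hC0 : 0 < C₀ := by positivity
  -- values in [0,1]
  have hrange : ∀ t : ℝ, 1/2 + c * auxP t ^ κ ∈ Set.Icc (0:ℝ) 1 := by
    intro t
    have h1 : 0 ≤ auxP t ^ κ := Real.rpow_nonneg (auxP_nonneg t) κ
    have h2 : auxP t ^ κ ≤ 1 :=
      Real.rpow_le_one (auxP_nonneg t) ((auxP_le_half t).trans (by norm_num)) hκ0.le
    constructor
    · nlinarith
    · nlinarith
  -- Hölder
  have hhold : ∀ (a b : Fin d → ℝ) (g : ℝ → ℝ), (∀ s t, |g s - g t| ≤ |s - t|) →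
      |(1/2 + c * auxP (g (a i0)) ^ κ) - (1/2 + c * auxP (g (b i0)) ^ κ)| ≤ L * ‖a - b‖ ^ κ := by
    intro a b g hg
    have h1 : (1/2 + c * auxP (g (a i0)) ^ κ) - (1/2 + c * auxP (g (b i0)) ^ κ)
        = c * (auxP (g (a i0)) ^ κ - auxP (g (b i0)) ^ κ) := by ring
    rw [h1, abs_mul, abs_of_pos hc]
    have h2 : |auxP (g (a i0)) ^ κ - auxP (g (b i0)) ^ κ| ≤ |auxP (g (a i0)) - auxP (g (b i0))| ^ κ :=
      aux_abs_rpow_sub hκ0 hκ1 (auxP_nonneg _) (auxP_nonneg _)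
    have h3 : |auxP (g (a i0)) - auxP (g (b i0))| ≤ |g (a i0) - g (b i0)| := auxP_lipschitz _ _
    have h4 : |g (a i0) - g (b i0)| ≤ |a i0 - b i0| := hg _ _
    have h5 : |a i0 - b i0| ≤ ‖a - b‖ := by
      have := norm_le_pi_norm (a - b) i0
      simpa [Real.norm_eq_abs] using this
    have h6 : |auxP (g (a i0)) - auxP (g (b i0))| ^ κ ≤ ‖a - b‖ ^ κ :=
      Real.rpow_le_rpow (abs_nonneg _) (h3.trans (h4.trans h5)) hκ0.le
    calc c * |auxP (g (a i0)) ^ κ - auxP (g (b i0)) ^ κ|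
        ≤ c * ‖a - b‖ ^ κ := by
          exact mul_le_mul_of_nonneg_left (h2.trans h6) hc.le
      _ ≤ L * ‖a - b‖ ^ κ := by
          exact mul_le_mul_of_nonneg_right hcL (Real.rpow_nonneg (norm_nonneg _) κ)
  -- key formula for the gap on the cube
  have hdiff : ∀ x : Fin d → ℝ, x ∈ Set.Icc (0 : Fin d → ℝ) 1 →
      |f₁ x - f₂ x| = c * |x i0 - 1/2| ^ κ := by
    intro x hx
    obtain ⟨hx0, hx1⟩ := hx
    have h0 : (0:ℝ) ≤ x i0 := hx0 i0
    have h1 : x i0 ≤ 1 := hx1 i0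
    have hsimp : f₁ x - f₂ x = c * (auxP (x i0) ^ κ - auxP (1 - x i0) ^ κ) := by
      simp only [hf1, hf2]; ring
    rcases le_total (x i0) (1/2) with h | h
    · rw [hsimp, auxP_eq_zero h, auxP_eq (t := 1 - x i0) (by linarith) (by linarith),
        Real.zero_rpow hκ0.ne']
      have hnn : (0:ℝ) ≤ (1 - x i0 - 1/2) ^ κ := Real.rpow_nonneg (by linarith) κ
      rw [zero_sub, abs_mul, abs_of_pos hc, abs_neg, abs_of_nonneg hnn,
        abs_of_nonpos (by linarith : x i0 - 1/2 ≤ 0)]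
      congr 1
      ring
    · rw [hsimp, auxP_eq h h1, auxP_eq_zero (t := 1 - x i0) (by linarith),
        Real.zero_rpow hκ0.ne']
      have hnn : (0:ℝ) ≤ (x i0 - 1/2) ^ κ := Real.rpow_nonneg (by linarith) κ
      rw [sub_zero, abs_mul, abs_of_pos hc, abs_of_nonneg hnn,
        abs_of_nonneg (by linarith : (0:ℝ) ≤ x i0 - 1/2)]
  -- volume of slabs
  have hvolPi : ∀ s : Set ℝ,
      volume (Set.pi Set.univ fun i => if i = i0 then s else Set.Icc (0:ℝ) 1) = volume s := by
    intro s
    rw [volume_pi_pi]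
    have h : ∀ i : Fin d, volume (if i = i0 then s else Set.Icc (0:ℝ) 1)
        = if i = i0 then volume s else 1 := by
      intro i; by_cases hi : i = i0 <;> simp [hi]
    simp_rw [h]
    rw [Finset.prod_ite_eq']
    simp
  refine ⟨f₁, f₂, C₀, hC0, fun x => hrange _, fun x => hrange _, ?_, ?_, ?_, ?_, ?_⟩
  · intro x _ y _
    show |(1/2 + c * auxP (x i0) ^ κ) - (1/2 + c * auxP (y i0) ^ κ)| ≤ L * ‖x - y‖ ^ κ
    exact hhold x y id (fun s t => le_refl _)
  · intro x _ y _
    exact hhold x y (fun t => 1 - t)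
      (fun s t => by rw [show (1-s)-(1-t) = -(s-t) by ring, abs_neg])
  · -- margin condition
    intro δ hδ
    obtain ⟨hδ0, hδ1⟩ := hδ
    set r : ℝ := (δ / c) ^ κ⁻¹ with hr
    have hr0 : 0 ≤ r := Real.rpow_nonneg (by positivity) _
    have hsub : {x ∈ Set.Icc (0 : Fin d → ℝ) 1 | 0 < |f₁ x - f₂ x| ∧ |f₁ x - f₂ x| ≤ δ}
        ⊆ Set.pi Set.univ
          (fun i => if i = i0 then Set.Icc (1/2 - r) (1/2 + r) else Set.Icc (0:ℝ) 1) := by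
      rintro x ⟨hx, -, hle⟩
      intro i _
      by_cases hi : i = i0
      · subst hi
        simp only [if_pos rfl]
        rw [hdiff x hx] at hle
        have h2 : |x i0 - 1/2| ^ κ ≤ δ / c := (le_div_iff₀ hc).2 (by linarith)
        have h3 : (|x i0 - 1/2| ^ κ) ^ κ⁻¹ ≤ (δ / c) ^ κ⁻¹ :=
          Real.rpow_le_rpow (Real.rpow_nonneg (abs_nonneg _) _) h2 (inv_nonneg.2 hκ0.le)
        rw [Real.rpow_rpow_inv (abs_nonneg _) hκ0.ne'] at h3
        have h4 := abs_le.1 h3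
        exact ⟨by linarith [h4.1], by linarith [h4.2]⟩
      · simp only [if_neg hi]
        exact ⟨hx.1 i, hx.2 i⟩
    refine (measure_mono hsub).trans ?_
    rw [hvolPi, Real.volume_Icc]
    apply ENNReal.ofReal_le_ofReal
    have heq : (1/2 + r) - (1/2 - r) = 2 * r := by ring
    rw [heq]
    have hmul : r = δ ^ κ⁻¹ * c⁻¹ ^ κ⁻¹ := by
      rw [hr, div_eq_mul_inv, Real.mul_rpow hδ0.le (inv_nonneg.2 hc.le)]
    have hδα : δ ^ κ⁻¹ ≤ δ ^ α := by
      apply Real.rpow_le_rpow_of_exponent_ge hδ0 hδ1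
      rw [← one_div, le_div_iff₀ hκ0]
      exact hακ
    have hcpos : (0:ℝ) ≤ c⁻¹ ^ κ⁻¹ := Real.rpow_nonneg (inv_nonneg.2 hc.le) _
    calc 2 * r = 2 * c⁻¹ ^ κ⁻¹ * δ ^ κ⁻¹ := by rw [hmul]; ring
      _ ≤ 2 * c⁻¹ ^ κ⁻¹ * δ ^ α := by
          apply mul_le_mul_of_nonneg_left hδα (by positivity)
      _ = C₀ * δ ^ α := by rw [hC0_def]
  · -- action 1 strictly optimal on a set of positive measure
    have hsub : (Set.pi Set.univ
        (fun i => if i = i0 then Set.Icc (3/4:ℝ) 1 else Set.Icc (0:ℝ) 1))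
        ⊆ {x ∈ Set.Icc (0 : Fin d → ℝ) 1 | f₂ x < f₁ x} := by
      intro x hx
      have hxi : ∀ i : Fin d, (0:ℝ) ≤ x i ∧ x i ≤ 1 := by
        intro i
        have := hx i (Set.mem_univ i)
        by_cases hi : i = i0
        · simp only [if_pos hi] at this; exact ⟨by linarith [this.1], this.2⟩
        · simp only [if_neg hi] at this; exact this
      have hx0 := hx i0 (Set.mem_univ i0)
      simp only [if_pos rfl] at hx0
      refine ⟨⟨fun i => (hxi i).1, fun i => (hxi i).2⟩, ?_⟩
      have e1 : auxP (x i0) = x i0 - 1/2 := auxP_eq (by linarith [hx0.1]) hx0.2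
      have e2 : auxP (1 - x i0) = 0 := auxP_eq_zero (by linarith [hx0.1])
      have hpos : 0 < (x i0 - 1/2) ^ κ := Real.rpow_pos_of_pos (by linarith [hx0.1]) κ
      show (1:ℝ)/2 + c * auxP (1 - x i0) ^ κ < 1/2 + c * auxP (x i0) ^ κ
      rw [e1, e2, Real.zero_rpow hκ0.ne']
      nlinarith
    calc (0:ENNReal) < ENNReal.ofReal (1 - 3/4) := by norm_num
      _ = volume (Set.pi Set.univ
            (fun i => if i = i0 then Set.Icc (3/4:ℝ) 1 else Set.Icc (0:ℝ) 1)) := by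
          rw [hvolPi, Real.volume_Icc]
      _ ≤ _ := measure_mono hsub
  · -- action 2 strictly optimal on a set of positive measure
    have hsub : (Set.pi Set.univ
        (fun i => if i = i0 then Set.Icc (0:ℝ) (1/4) else Set.Icc (0:ℝ) 1))
        ⊆ {x ∈ Set.Icc (0 : Fin d → ℝ) 1 | f₁ x < f₂ x} := by
      intro x hx
      have hxi : ∀ i : Fin d, (0:ℝ) ≤ x i ∧ x i ≤ 1 := by
        intro i
        have := hx i (Set.mem_univ i)
        by_cases hi : i = i0
        · simp only [if_pos hi] at this; exact ⟨this.1, by linarith [this.2]⟩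
        · simp only [if_neg hi] at this; exact this
      have hx0 := hx i0 (Set.mem_univ i0)
      simp only [if_pos rfl] at hx0
      refine ⟨⟨fun i => (hxi i).1, fun i => (hxi i).2⟩, ?_⟩
      have e1 : auxP (x i0) = 0 := auxP_eq_zero (by linarith [hx0.2])
      have e2 : auxP (1 - x i0) = 1 - x i0 - 1/2 :=
        auxP_eq (by linarith [hx0.2]) (by linarith [hx0.1])
      have hpos : 0 < (1 - x i0 - 1/2) ^ κ := Real.rpow_pos_of_pos (by linarith [hx0.2]) κ
      show (1:ℝ)/2 + c * auxP (x i0) ^ κ < 1/2 + c * auxP (1 - x i0) ^ κ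
      rw [e1, e2, Real.zero_rpow hκ0.ne']
      nlinarith
    calc (0:ENNReal) < ENNReal.ofReal (1/4 - 0) := by norm_num
      _ = volume (Set.pi Set.univ
            (fun i => if i = i0 then Set.Icc (0:ℝ) (1/4) else Set.Icc (0:ℝ) 1)) := by
          rw [hvolPi, Real.volume_Icc]
      _ ≤ _ := measure_mono hsub
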